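/- If D ≥ 1 is the diameter of an initial connected configuration of n particles and the target line has length n - 1 > D, then at least one particle must move distance at least (n-1-D)/2, and more generally the k-th largest required displacement is at least (n - 1 - D)/2 - (k-1) for each k with this quantity positive; summing yields a lower bound of Σ_{k : (n-1-D)/2 - (k-1) > 0} ((n-1-D)/2 - (k-1)) on the total displacement. -/

import Mathlib

/-- The infinite equilateral triangular grid graph on `ℤ × ℤ`. -/
def Geqt : SimpleGraph (ℤ × ℤ) :=
  SimpleGraph.fromRel (fun v w => w - v ∈ ({(1, 0), (0, 1), (1, 1)} : Set (ℤ × ℤ)))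

/-- The six lattice directions along which a straight line in the triangular grid can run. -/
def lineDirs : Set (ℤ × ℤ) :=
  {(1, 0), (0, 1), (1, 1), (-1, 0), (0, -1), (-1, -1)}

/-! The grid distance dominates the change of either coordinate, and along each of the six line
directions one coordinate moves by exactly one per step, so line nodes `i` and `j` are at
distance at least `|i - j|`. By the triangle inequality through the initial set, any two
particles that move less than `c` end at line positions with `|i - j| < 2c + D`; hence at most
`n - 1 - 2k` particles move less than `c = (n - 1 - D)/2 - k`, and at least `2k + 1` move at
least `c`. Pairing the `k`-th threshold with the `k`-th largest displacement (peel off the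
largest one and induct) gives the bound on the total displacement. -/

open Finset

namespace SimpleGraph

theorem reachable_add_zsmul {A : Type*} [AddGroup A] {G : SimpleGraph A} {e : A}
    (he : ∀ w, G.Adj w (w + e)) (w : A) (a : ℤ) : G.Reachable w (w + a • e) := by
  induction a using Int.induction_on with
  | zero => simp
  | succ i ih =>
    rw [add_one_zsmul, ← add_assoc]
    exact ih.trans (he _).reachable
  | pred i ih =>
    have h := (he (w + (-(i : ℤ) - 1) • e)).reachable.symm
    rw [add_assoc, ← add_one_zsmul, sub_add_cancel] at h
    exact ih.trans h

variable {V : Type*} {G : SimpleGraph V}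

theorem Connected.dist_le_dist_add_dist_add_dist (hG : G.Connected) (a b a' b' : V) :
    G.dist a' b' ≤ G.dist a a' + G.dist a b + G.dist b b' :=
  calc G.dist a' b' ≤ G.dist a' a + G.dist a b' := hG.dist_triangle
    _ ≤ G.dist a' a + (G.dist a b + G.dist b b') := by gcongr; exact hG.dist_triangle
    _ = G.dist a a' + G.dist a b + G.dist b b' := by rw [dist_comm]; ring

theorem Connected.abs_sub_le_dist (hG : G.Connected) {f : V → ℤ}
    (hf : ∀ u v, G.Adj u v → |f u - f v| ≤ 1) (u v : V) : |f u - f v| ≤ G.dist u v := by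
  obtain ⟨p, hp⟩ := (hG u v).exists_walk_length_eq_dist
  rw [← hp]
  clear hp
  induction p with
  | nil => simp
  | cons h q ih =>
    rw [Walk.length_cons, Nat.cast_add_one]
    calc _ ≤ |f _ - f _| + |f _ - f _| := abs_sub_le _ _ _
      _ ≤ _ := by linarith [hf _ _ h]

end SimpleGraph

namespace Geqt

theorem adj_add {v d : ℤ × ℤ} (hd : d ∈ ({(1, 0), (0, 1), (1, 1)} : Set (ℤ × ℤ))) :
    Geqt.Adj v (v + d) := by
  refine (SimpleGraph.fromRel_adj _ _ _).2 ⟨?_, .inl (by simpa using hd)⟩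
  rcases hd with rfl | rfl | rfl <;> simp [Prod.ext_iff]

theorem connected : Geqt.Connected := by
  refine (SimpleGraph.connected_iff _).2 ⟨fun u v => ?_, ⟨0⟩⟩
  have hx := SimpleGraph.reachable_add_zsmul (fun w => adj_add (v := w) (d := (1, 0)) (by simp))
    u (v - u).1
  have hy := SimpleGraph.reachable_add_zsmul (fun w => adj_add (v := w) (d := (0, 1)) (by simp))
    (u + (v - u).1 • (1, 0)) (v - u).2
  convert hx.trans hy using 1
  ext <;> simp

theorem abs_sub_le_of_adj {u v : ℤ × ℤ} (h : Geqt.Adj u v) :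
    |u.1 - v.1| ≤ 1 ∧ |u.2 - v.2| ≤ 1 := by
  simp only [Geqt, SimpleGraph.fromRel_adj, Set.mem_insert_iff, Set.mem_singleton_iff,
    Prod.ext_iff, Prod.fst_sub, Prod.snd_sub] at h
  rw [abs_le, abs_le]
  omega

theorem abs_sub_le_dist_of_mem_lineDirs {d : ℤ × ℤ} (hd : d ∈ lineDirs) (p : ℤ × ℤ) (a b : ℤ) :
    |a - b| ≤ Geqt.dist (p + a • d) (p + b • d) := by
  have hfst := connected.abs_sub_le_dist (f := Prod.fst)
    (fun u v h => (abs_sub_le_of_adj h).1) (p + a • d) (p + b • d)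
  have hsnd := connected.abs_sub_le_dist (f := Prod.snd)
    (fun u v h => (abs_sub_le_of_adj h).2) (p + a • d) (p + b • d)
  have hunit : |d.1| = 1 ∨ |d.2| = 1 := by
    rcases hd with rfl | rfl | rfl | rfl | rfl | rfl <;> simp
  simp only [Prod.fst_add, Prod.snd_add, Prod.smul_fst, Prod.smul_snd, smul_eq_mul,
    add_sub_add_left_eq_sub, ← sub_mul, abs_mul] at hfst hsnd
  rcases hunit with h | h
  · simpa [h] using hfst
  · simpa [h] using hsnd

end Geqt

theorem Finset.card_le_of_forall_lt_add {S : Finset ℕ} {m : ℕ}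
    (h : ∀ i ∈ S, ∀ j ∈ S, i < j + m) : #S ≤ m := by
  obtain rfl | hne := S.eq_empty_or_nonempty
  · simp
  have hsub : S ⊆ Ico (S.min' hne) (S.min' hne + m) := fun i hi =>
    mem_Ico.2 ⟨S.min'_le i hi, h i hi _ (S.min'_mem hne)⟩
  simpa using card_le_card hsub

section Displacement

variable {n : ℕ} {g : Fin n → ℝ} {D : ℝ}

theorem card_filter_lt_le (h : ∀ i j : Fin n, |(i : ℝ) - j| ≤ g i + D + g j) {c : ℝ} {m : ℕ}
    (hm : 2 * c + D ≤ m) : #{i | g i < c} ≤ m := by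
  rw [← card_map Fin.valEmbedding]
  refine card_le_of_forall_lt_add fun a ha b hb => ?_
  obtain ⟨i, hi, rfl⟩ := mem_map.1 ha
  obtain ⟨j, hj, rfl⟩ := mem_map.1 hb
  have hgi := (mem_filter.1 hi).2
  have hgj := (mem_filter.1 hj).2
  have : ((i : ℕ) : ℝ) < j + m := by linarith [(abs_le.1 (h i j)).2]
  exact_mod_cast this

theorem two_mul_add_one_le_card_filter (hD : 0 ≤ D)
    (h : ∀ i j : Fin n, |(i : ℝ) - j| ≤ g i + D + g j) {k : ℕ}
    (hk : 0 < ((n : ℝ) - 1 - D) / 2 - k) :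
    2 * k + 1 ≤ #{i | ((n : ℝ) - 1 - D) / 2 - k ≤ g i} := by
  have hkn : 2 * k + 1 ≤ n := by
    have : ((2 * k + 1 : ℕ) : ℝ) ≤ n := by push_cast; linarith
    exact_mod_cast this
  have hlt := card_filter_lt_le h (c := ((n : ℝ) - 1 - D) / 2 - k) (m := n - (2 * k + 1))
    (by rw [Nat.cast_sub hkn]; push_cast; linarith)
  have hsplit := card_filter_add_card_filter_not (s := (univ : Finset (Fin n)))
    (fun i => g i < ((n : ℝ) - 1 - D) / 2 - k)
  simp only [not_lt, card_univ, Fintype.card_fin] at hsplit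
  omega

end Displacement

theorem sum_range_max_zero_le_sum {ι : Type*} [DecidableEq ι] (s : Finset ι) {g : ι → ℝ}
    (hg : ∀ i, 0 ≤ g i) (c : ℕ → ℝ) (h : ∀ k, 0 < c k → k < #{i ∈ s | c k ≤ g i}) :
    ∑ k ∈ range #s, max 0 (c k) ≤ ∑ i ∈ s, g i := by
  induction s using Finset.induction_on_max_value g generalizing c with
  | empty => simp
  | insert a s ha hmax ih =>
    rw [card_insert_of_notMem ha, sum_range_succ', sum_insert ha, add_comm]
    gcongr
    · rw [max_le_iff]
      refine ⟨hg a, ?_⟩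
      rcases le_or_gt (c 0) 0 with hc | hc
      · exact hc.trans (hg a)
      obtain ⟨i, hi⟩ := card_pos.1 (h 0 hc)
      obtain ⟨rfl | hi, hci⟩ := by simpa using hi
      · exact hci
      · exact hci.trans (hmax i hi)
    · refine ih _ fun k hk => ?_
      have := h (k + 1) hk
      have := card_insert_le a {i ∈ s | c (k + 1) ≤ g i}
      rw [filter_insert] at *
      split_ifs at * <;> omega

theorem line_formation_displacement_bounds_general (n : ℕ) (D : ℝ) (hD : 1 ≤ D)
    (hDn : D < (n : ℝ) - 1) (init fin : Fin n → ℤ × ℤ)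
    (hdiam : ∀ i j, (Geqt.dist (init i) (init j) : ℝ) ≤ D)
    (hline : ∃ p d, d ∈ lineDirs ∧ ∀ i : Fin n, fin i = p + ((i : ℕ) : ℤ) • d) :
    (∃ i, ((n : ℝ) - 1 - D) / 2 ≤ (Geqt.dist (init i) (fin i) : ℝ)) ∧
    (∀ k : ℕ, 1 ≤ k → 0 < ((n : ℝ) - 1 - D) / 2 - ((k : ℝ) - 1) →
      ∃ T : Finset (Fin n), k ≤ T.card ∧
        ∀ i ∈ T, ((n : ℝ) - 1 - D) / 2 - ((k : ℝ) - 1) ≤ (Geqt.dist (init i) (fin i) : ℝ)) ∧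
    (∑ k ∈ Finset.Icc 1 n, max 0 (((n : ℝ) - 1 - D) / 2 - ((k : ℝ) - 1))
      ≤ ∑ i, (Geqt.dist (init i) (fin i) : ℝ)) := by
  obtain ⟨p, d, hd, hfin⟩ := hline
  have hspread : ∀ i j : Fin n, |(i : ℝ) - j| ≤
      Geqt.dist (init i) (fin i) + D + Geqt.dist (init j) (fin j) := by
    intro i j
    have hsep := Geqt.abs_sub_le_dist_of_mem_lineDirs hd p i j
    rw [← hfin, ← hfin] at hsep
    have hsep' : |(i : ℝ) - j| ≤ Geqt.dist (fin i) (fin j) := by exact_mod_cast hsep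
    have htri : (Geqt.dist (fin i) (fin j) : ℝ) ≤ Geqt.dist (init i) (fin i) +
        Geqt.dist (init i) (init j) + Geqt.dist (init j) (fin j) := by
      exact_mod_cast Geqt.connected.dist_le_dist_add_dist_add_dist _ _ _ _
    linarith [hdiam i j]
  have hcount : ∀ k : ℕ, 0 < ((n : ℝ) - 1 - D) / 2 - k →
      k < #{i | ((n : ℝ) - 1 - D) / 2 - k ≤ Geqt.dist (init i) (fin i)} := fun k hk => by
    have := two_mul_add_one_le_card_filter (by linarith) hspread hk
    omega
  refine ⟨?_, fun k hk hpos => ?_, ?_⟩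
  · obtain ⟨i, hi⟩ := card_pos.1 (hcount 0 (by simp; linarith))
    exact ⟨i, by simpa using hi⟩
  · obtain ⟨j, rfl⟩ := Nat.exists_eq_add_of_le' hk
    push_cast at hpos ⊢
    rw [add_sub_cancel_right] at hpos ⊢
    exact ⟨_, hcount j hpos, fun i hi => (mem_filter.1 hi).2⟩
  · rw [← Ico_add_one_right_eq_Icc, sum_Ico_eq_sum_range]
    simpa using sum_range_max_zero_le_sum univ (fun i => Nat.cast_nonneg _) _ hcount

/-- If `n` particles initially occupy a set of diameter `D` (in the grid metric) with
`D < n - 1` and finally occupy `n` collinear consecutive grid nodes (a line of graph-diameter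
`n - 1`), then: some particle moves distance at least `(n-1-D)/2`; for each `k` with
`(n-1-D)/2 - (k-1) > 0` at least `k` particles move distance at least `(n-1-D)/2 - (k-1)`
(the `k`-th largest displacement bound); and the total displacement is at least
`∑ₖ max 0 ((n-1-D)/2 - (k-1))`. -/
theorem line_formation_displacement_bounds (n : ℕ) (hn : 2 ≤ n) (D : ℝ) (hD : 1 ≤ D)
    (hDn : D < (n : ℝ) - 1) (init fin : Fin n → ℤ × ℤ)
    (hinj : Function.Injective init)
    (hdiam : ∀ i j, (Geqt.dist (init i) (init j) : ℝ) ≤ D)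
    (hline : ∃ p d, d ∈ lineDirs ∧ ∀ i : Fin n, fin i = p + ((i : ℕ) : ℤ) • d) :
    (∃ i, ((n : ℝ) - 1 - D) / 2 ≤ (Geqt.dist (init i) (fin i) : ℝ)) ∧
    (∀ k : ℕ, 1 ≤ k → 0 < ((n : ℝ) - 1 - D) / 2 - ((k : ℝ) - 1) →
      ∃ T : Finset (Fin n), k ≤ T.card ∧
        ∀ i ∈ T, ((n : ℝ) - 1 - D) / 2 - ((k : ℝ) - 1) ≤ (Geqt.dist (init i) (fin i) : ℝ)) ∧
    (∑ k ∈ Finset.Icc 1 n, max 0 (((n : ℝ) - 1 - D) / 2 - ((k : ℝ) - 1))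
      ≤ ∑ i, (Geqt.dist (init i) (fin i) : ℝ)) :=
  line_formation_displacement_bounds_general n D hD hDn init fin hdiam hline
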